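/- Suppose λ₁ ≥ ⋯ ≥ λ_{mn} ≥ 0, Σλᵢ = 1, and λ₁ ≤ λ_{mn−1} + 2√(λ_{mn−2}·λ_{mn}). Then λ₁ ≤ 3/(2+mn), with equality if and only if λ = (3/(2+mn), 1/(2+mn), …, 1/(2+mn)). -/
import Mathlib

open Finset

lemma absPPT_amgm_sqrt {a c : ℝ} (ha : 0 ≤ a) (hc : 0 ≤ c) :
    2 * Real.sqrt (a * c) ≤ a + c := by
  have h1 : Real.sqrt (a * c) = Real.sqrt a * Real.sqrt c := Real.sqrt_mul ha c
  nlinarith [sq_nonneg (Real.sqrt a - Real.sqrt c), Real.sq_sqrt ha, Real.sq_sqrt hc]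

lemma absPPT_amgm_sqrt_eq {a c : ℝ} (ha : 0 ≤ a) (hc : 0 ≤ c)
    (h : 2 * Real.sqrt (a * c) = a + c) : a = c := by
  have h1 : Real.sqrt (a * c) = Real.sqrt a * Real.sqrt c := Real.sqrt_mul ha c
  have h2 : (Real.sqrt a - Real.sqrt c) ^ 2 = 0 := by
    nlinarith [Real.sq_sqrt ha, Real.sq_sqrt hc]
  have h3 : Real.sqrt a = Real.sqrt c := by
    have := pow_eq_zero_iff (n := 2) (by norm_num) |>.mp h2
    linarith
  calc a = Real.sqrt a ^ 2 := (Real.sq_sqrt ha).symm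
    _ = Real.sqrt c ^ 2 := by rw [h3]
    _ = c := Real.sq_sqrt hc

lemma absPPT_sum_eq_of_le (s : Finset ℕ) (f : ℕ → ℝ) (a : ℝ)
    (hle : ∀ i ∈ s, a ≤ f i) (hs : ∑ i ∈ s, f i ≤ (s.card : ℝ) * a) :
    ∀ i ∈ s, f i = a := by
  intro i hi
  have hkey : f i + ∑ j ∈ s.erase i, f j = ∑ j ∈ s, f j := Finset.add_sum_erase s f hi
  have hpos : 1 ≤ s.card := Finset.card_pos.mpr ⟨i, hi⟩
  have hlow : ((s.erase i).card : ℝ) * a ≤ ∑ j ∈ s.erase i, f j := by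
    have := Finset.card_nsmul_le_sum (s.erase i) f a
      (fun j hj => hle j (Finset.mem_of_mem_erase hj))
    simpa [nsmul_eq_mul] using this
  have hcast : ((s.erase i).card : ℝ) = (s.card : ℝ) - 1 := by
    rw [Finset.card_erase_of_mem hi]
    push_cast [Nat.cast_sub hpos]
    ring
  rw [hcast] at hlow
  have h1 := hle i hi
  linarith

set_option maxHeartbeats 800000 in
/-- Suppose `λ₁ ≥ ⋯ ≥ λ_{mn} ≥ 0` sums to `1` and satisfies
`λ₁ ≤ λ_{mn−1} + 2√(λ_{mn−2}·λ_{mn})`. Then `λ₁ ≤ 3/(2+mn)`, with equality iff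
`λ = (3/(2+mn), 1/(2+mn), …, 1/(2+mn))`. -/
theorem largest_eigenvalue_bound_absPPT (m n : ℕ) (hmn : 4 ≤ m * n)
    (l : Fin (m * n) → ℝ)
    (hsort : ∀ i j : Fin (m * n), i ≤ j → l j ≤ l i)
    (hnonneg : ∀ i, 0 ≤ l i)
    (hsum : ∑ i, l i = 1)
    (hineq : l ⟨0, by omega⟩ ≤ l ⟨m * n - 2, by omega⟩ +
      2 * Real.sqrt (l ⟨m * n - 3, by omega⟩ * l ⟨m * n - 1, by omega⟩)) :
    l ⟨0, by omega⟩ ≤ 3 / (2 + (m * n : ℝ)) ∧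
      (l ⟨0, by omega⟩ = 3 / (2 + (m * n : ℝ)) ↔
        ∀ i : Fin (m * n),
          l i = if i.val = 0 then 3 / (2 + (m * n : ℝ)) else 1 / (2 + (m * n : ℝ))) := by
  have hN : 4 ≤ m * n := hmn
  set g : ℕ → ℝ := fun x => if h : x < m * n then l ⟨x, h⟩ else 0 with hg
  have hgl : ∀ i : Fin (m * n), g i.val = l i := by
    intro i
    simp [hg, i.isLt]
  have hg0 : g 0 = l ⟨0, by omega⟩ := by
    simp only [hg]; exact dif_pos (by omega)
  have hgA : g (m * n - 3) = l ⟨m * n - 3, by omega⟩ := by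
    simp only [hg]; exact dif_pos (by omega)
  have hgB : g (m * n - 2) = l ⟨m * n - 2, by omega⟩ := by
    simp only [hg]; exact dif_pos (by omega)
  have hgC : g (m * n - 1) = l ⟨m * n - 1, by omega⟩ := by
    simp only [hg]; exact dif_pos (by omega)
  -- basic facts
  have hM4 : (4 : ℝ) ≤ (m : ℝ) * (n : ℝ) := by exact_mod_cast hN
  have hc3 : ((m * n - 3 : ℕ) : ℝ) = (m : ℝ) * (n : ℝ) - 3 := by
    have h3 : 3 ≤ m * n := by omega
    push_cast [Nat.cast_sub h3]
    ring
  have hA0 : 0 ≤ g (m * n - 3) := by rw [hgA]; exact hnonneg _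
  have hC0 : 0 ≤ g (m * n - 1) := by rw [hgC]; exact hnonneg _
  have sBA : g (m * n - 2) ≤ g (m * n - 3) := by
    rw [hgA, hgB]
    exact hsort ⟨m * n - 3, by omega⟩ ⟨m * n - 2, by omega⟩ (Fin.mk_le_mk.mpr (by omega))
  have sCB : g (m * n - 1) ≤ g (m * n - 2) := by
    rw [hgB, hgC]
    exact hsort ⟨m * n - 2, by omega⟩ ⟨m * n - 1, by omega⟩ (Fin.mk_le_mk.mpr (by omega))
  have hineq2 : g 0 ≤ g (m * n - 2) + 2 * Real.sqrt (g (m * n - 3) * g (m * n - 1)) := by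
    rw [hg0, hgA, hgB, hgC]
    exact hineq
  have hag : 2 * Real.sqrt (g (m * n - 3) * g (m * n - 1))
      ≤ g (m * n - 3) + g (m * n - 1) := absPPT_amgm_sqrt hA0 hC0
  -- sum decomposition
  have hlow : ∀ i ∈ Finset.Ico 1 (m * n - 2), g (m * n - 3) ≤ g i := by
    intro i hi
    simp only [Finset.mem_Ico] at hi
    have hi' : i < m * n := by omega
    have hgi : g i = l ⟨i, hi'⟩ := by simp only [hg]; exact dif_pos hi'
    rw [hgi, hgA]
    exact hsort ⟨i, hi'⟩ ⟨m * n - 3, by omega⟩ (Fin.mk_le_mk.mpr (by omega))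
  have hsum' : g 0 + (∑ i ∈ Finset.Ico 1 (m * n - 2), g i)
      + g (m * n - 2) + g (m * n - 1) = 1 := by
    have h1 : ∑ i : Fin (m * n), l i = ∑ i ∈ Finset.range (m * n), g i := by
      rw [← Fin.sum_univ_eq_sum_range g]
      exact Finset.sum_congr rfl fun i _ => (hgl i).symm
    have h2 : ∑ i ∈ Finset.range (m * n), g i
        = g 0 + (∑ i ∈ Finset.Ico 1 (m * n - 2), g i) + g (m * n - 2) + g (m * n - 1) := by
      rw [Finset.range_eq_Ico]
      rw [Finset.sum_eq_sum_Ico_succ_bot (by omega : 0 < m * n)]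
      rw [← Finset.sum_Ico_consecutive g (by omega : 1 ≤ m * n - 2) (by omega : m * n - 2 ≤ m * n)]
      rw [Finset.sum_eq_sum_Ico_succ_bot (by omega : m * n - 2 < m * n)]
      rw [show m * n - 2 + 1 = m * n - 1 from by omega]
      rw [Finset.sum_eq_sum_Ico_succ_bot (by omega : m * n - 1 < m * n)]
      rw [show m * n - 1 + 1 = m * n from by omega, Finset.Ico_self, Finset.sum_empty]
      ring
    rw [← h2, ← h1, hsum]
  have hcard : ((Finset.Ico 1 (m * n - 2)).card : ℝ) = (m : ℝ) * (n : ℝ) - 3 := by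
    rw [Nat.card_Ico, show m * n - 2 - 1 = m * n - 3 from by omega, hc3]
  have hScard : ((m : ℝ) * (n : ℝ) - 3) * g (m * n - 3)
      ≤ ∑ i ∈ Finset.Ico 1 (m * n - 2), g i := by
    have := Finset.card_nsmul_le_sum (Finset.Ico 1 (m * n - 2)) g (g (m * n - 3)) hlow
    rw [nsmul_eq_mul, hcard] at this
    exact this
  have hMpos : (0 : ℝ) < 2 + (m : ℝ) * (n : ℝ) := by linarith
  -- the main bound
  have hb : g 0 ≤ 3 / (2 + (m : ℝ) * (n : ℝ)) := by
    rw [le_div_iff₀ hMpos]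
    nlinarith [hsum', hScard, hineq2, hag, sBA, sCB, hA0, hC0, hM4,
      mul_nonneg (by linarith : (0:ℝ) ≤ (m:ℝ)*(n:ℝ) - 4) (by linarith : 0 ≤ g (m*n-3) - g (m*n-2)),
      mul_nonneg (by linarith : (0:ℝ) ≤ (m:ℝ)*(n:ℝ) - 4) (by linarith : 0 ≤ g (m*n-3) - g (m*n-1)),
      mul_nonneg (by linarith : (0:ℝ) ≤ (m:ℝ)*(n:ℝ) - 1)
        (by linarith : 0 ≤ g (m*n-2) + 2 * Real.sqrt (g (m*n-3) * g (m*n-1)) - g 0),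
      mul_nonneg (by linarith : (0:ℝ) ≤ (m:ℝ)*(n:ℝ) - 1)
        (by linarith : 0 ≤ g (m*n-3) + g (m*n-1) - 2 * Real.sqrt (g (m*n-3) * g (m*n-1)))]
  constructor
  · rw [← hg0]; exact hb
  constructor
  · -- equality case, forward
    intro heq0
    have heq : g 0 = 3 / (2 + (m : ℝ) * (n : ℝ)) := by rw [hg0]; exact heq0
    have hLM : g 0 * (2 + (m : ℝ) * (n : ℝ)) = 3 := by
      rw [heq]; field_simp
    -- slack terms
    set M : ℝ := (m : ℝ) * (n : ℝ) with hM
    set A := g (m * n - 3) with hA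
    set B := g (m * n - 2) with hB
    set C := g (m * n - 1) with hC
    set L := g 0 with hL
    set S := ∑ i ∈ Finset.Ico 1 (m * n - 2), g i with hS
    set t := Real.sqrt (A * C) with ht
    have sl2 : (0:ℝ) ≤ (M - 1) * (B + 2*t - L) :=
      mul_nonneg (by linarith) (by linarith)
    have sl3 : (0:ℝ) ≤ (M - 1) * (A + C - 2*t) :=
      mul_nonneg (by linarith) (by linarith)
    have sl4 : (0:ℝ) ≤ (M - 4) * (A - B) :=
      mul_nonneg (by linarith) (by linarith)
    have sl5 : (0:ℝ) ≤ (M - 4) * (A - C) :=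
      mul_nonneg (by linarith) (by linarith)
    have sl1 : (0:ℝ) ≤ S - (M - 3) * A := by linarith
    -- identity: 3 - L*(2+M) = 3*sl1 + sl2 + sl3 + sl4 + sl5, and LHS = 0
    have hzero : 3 * (S - (M-3)*A) + (M-1)*(B + 2*t - L) + (M-1)*(A + C - 2*t)
        + (M-4)*(A-B) + (M-4)*(A-C) = 0 := by
      have hs1 : L + S + B + C = 1 := hsum'
      linear_combination 3 * hs1 - hLM
    have e1 : S = (M - 3) * A := by linarith [sl1, sl2, sl3, sl4, sl5, hzero]
    have e2 : (M - 1) * (B + 2*t - L) = 0 := by linarith [sl1, sl2, sl3, sl4, sl5, hzero]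
    have e3 : (M - 1) * (A + C - 2*t) = 0 := by linarith [sl1, sl2, sl3, sl4, sl5, hzero]
    have hM1 : (M - 1) ≠ 0 := by intro h; rw [hM] at h; nlinarith
    have e2' : L = B + 2*t := by
      have := mul_eq_zero.mp e2
      rcases this with h | h
      · exact absurd h hM1
      · linarith
    have e3' : 2*t = A + C := by
      have := mul_eq_zero.mp e3
      rcases this with h | h
      · exact absurd h hM1
      · linarith
    have hAC : A = C := absPPT_amgm_sqrt_eq hA0 hC0 e3'
    have hABeq : B = A := by linarith
    have hL3A : L = 3 * A := by rw [e2', e3']; linarith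
    have hAval : A = 1 / (2 + M) := by
      have h1 : L * (2 + M) = 3 := hLM
      rw [hL3A] at h1
      field_simp
      linarith
    have hmid : ∀ i ∈ Finset.Ico 1 (m * n - 2), g i = A := by
      apply absPPT_sum_eq_of_le _ _ _ hlow
      rw [hcard]
      rw [← hS, e1, hM]
    intro i
    have hiv := i.isLt
    rcases Nat.eq_zero_or_pos i.val with h0 | hposi
    · rw [if_pos h0]
      have : l i = g 0 := by rw [← hgl i, h0]
      rw [this, ← hL, heq, hM]
    · rw [if_neg (by omega)]
      have hval : l i = g i.val := (hgl i).symm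
      rcases Nat.lt_or_ge i.val (m * n - 2) with hlt | hge
      · have : g i.val = A := hmid i.val (Finset.mem_Ico.mpr ⟨hposi, hlt⟩)
        rw [hval, this, hAval, hM]
      · rcases Nat.lt_or_ge i.val (m * n - 1) with hlt2 | hge2
        · have hv : i.val = m * n - 2 := by omega
          rw [hval, hv, ← hB, hABeq, hAval, hM]
        · have hv : i.val = m * n - 1 := by omega
          rw [hval, hv, ← hC, ← hAC, hAval, hM]
  · -- converse
    intro h
    exact (h ⟨0, by omega⟩).trans (if_pos rfl)
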